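/- The RKG2 method converges with order 2 on the linear model equation: for every integer s ≥ 2 and every complex number λ, there exists a constant C > 0 such that for every positive integer n, |R_s(λ/n)^n − exp(λ)| ≤ C/n^2. -/

import Mathlib

/-- The Gegenbauer polynomials with parameter 3/2, evaluated at complex arguments:
`C_0(x) = 1`, `C_1(x) = 3x`, and
`C_j(x) = ((2j+1)/j)·x·C_{j-1}(x) − ((j+1)/j)·C_{j-2}(x)` for `j ≥ 2`. -/
noncomputable def gegenbauerC : ℕ → ℂ → ℂ
  | 0, _ => 1
  | 1, x => 3 * x
  | (j + 2), x =>
      (2 * ((j : ℂ) + 2) + 1) / ((j : ℂ) + 2) * x * gegenbauerC (j + 1) x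
        - (((j : ℂ) + 2) + 1) / ((j : ℂ) + 2) * gegenbauerC j x

/-- The RKG2 coefficient `b_j = 4(j−1)(j+4)/(3j(j+1)(j+2)(j+3))`. -/
noncomputable def rkg2B (j : ℕ) : ℝ :=
  4 * ((j : ℝ) - 1) * ((j : ℝ) + 4) /
    (3 * (j : ℝ) * ((j : ℝ) + 1) * ((j : ℝ) + 2) * ((j : ℝ) + 3))

/-- The RKG2 coefficient `a_j = 1 − ((j+1)(j+2)/2)·b_j`. -/
noncomputable def rkg2A (j : ℕ) : ℝ :=
  1 - ((j : ℝ) + 1) * ((j : ℝ) + 2) / 2 * rkg2B j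

/-- The RKG2 parameter `w_1 = 6/((s+4)(s−1))`. -/
noncomputable def rkg2W (s : ℕ) : ℝ := 6 / (((s : ℝ) + 4) * ((s : ℝ) - 1))

/-- The RKG2 stability polynomial `R_j(z) = a_j + b_j·C_j(1 + w_1·z)`, evaluated at complex
arguments, where `w_1` is built from the stage number `s`. -/
noncomputable def rkg2RC (s j : ℕ) (z : ℂ) : ℂ :=
  (rkg2A j : ℂ) + (rkg2B j : ℂ) * gegenbauerC j (1 + (rkg2W s : ℂ) * z)

/-!
The stability polynomial `R_s` agrees with `exp` up to order two at `0`: with `C_j` written as a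
polynomial in `z` via `x = 1 + w₁ z`, its coefficients of `1, z, z²` are `1, 1, 1/2`, so
`‖R_s(z) - e^z‖ ≤ K ‖z‖³` on the disc `‖z‖ ≤ ‖λ‖`. Both `R_s(λ/n)` and `e^{λ/n}` then have norm at
most `m = exp(‖λ‖/n + K‖λ‖³/n³)`, and `a^n - b^n = (a - b) ∑ aⁱ bⁿ⁻¹⁻ⁱ` bounds the global error by
`n · mⁿ · K‖λ‖³/n³ ≤ K‖λ‖³ e^{‖λ‖ + K‖λ‖³} / n²`.
-/

open Polynomial Finset Nat

theorem norm_pow_sub_pow_le {R : Type*} [NormedCommRing R] [NormOneClass R] {a b : R} {m : ℝ}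
    (ha : ‖a‖ ≤ m) (hb : ‖b‖ ≤ m) (n : ℕ) :
    ‖a ^ n - b ^ n‖ ≤ n * m ^ (n - 1) * ‖a - b‖ := by
  have hm : 0 ≤ m := (norm_nonneg a).trans ha
  have hterm : ∀ i ∈ range n, ‖a ^ i * b ^ (n - 1 - i)‖ ≤ m ^ (n - 1) := fun i hi => by
    calc ‖a ^ i * b ^ (n - 1 - i)‖ ≤ ‖a‖ ^ i * ‖b‖ ^ (n - 1 - i) :=
          (norm_mul_le _ _).trans (mul_le_mul (norm_pow_le _ _) (norm_pow_le _ _) (by positivity)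
            (by positivity))
      _ ≤ m ^ i * m ^ (n - 1 - i) := by gcongr
      _ = m ^ (n - 1) := by rw [← pow_add]; congr 1; have := mem_range.1 hi; omega
  calc ‖a ^ n - b ^ n‖ ≤ ‖∑ i ∈ range n, a ^ i * b ^ (n - 1 - i)‖ * ‖a - b‖ := by
        rw [← geom_sum₂_mul]; exact norm_mul_le _ _
    _ ≤ (∑ _i ∈ range n, m ^ (n - 1)) * ‖a - b‖ := by gcongr; exact norm_sum_le_of_le _ hterm
    _ = n * m ^ (n - 1) * ‖a - b‖ := by rw [sum_const, card_range, nsmul_eq_mul]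

theorem norm_pow_div_sub_exp_le {f : ℂ → ℂ} {lam : ℂ} {K : ℝ} {p : ℕ} (hK : 0 ≤ K)
    (hf : ∀ z : ℂ, ‖z‖ ≤ ‖lam‖ → ‖f z - Complex.exp z‖ ≤ K * ‖z‖ ^ (p + 1)) {n : ℕ} (hn : 0 < n) :
    ‖f (lam / n) ^ n - Complex.exp lam‖ ≤
      K * ‖lam‖ ^ (p + 1) * Real.exp (‖lam‖ + K * ‖lam‖ ^ (p + 1)) / n ^ p := by
  set L := ‖lam‖
  set z := lam / n
  have hz : ‖z‖ = L / n := by rw [norm_div, Complex.norm_natCast]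
  have hzL : ‖z‖ ≤ L := hz ▸ div_le_self (norm_nonneg _) (by exact_mod_cast hn)
  set δ := K * ‖z‖ ^ (p + 1)
  set m := Real.exp (‖z‖ + δ)
  have hδ : 0 ≤ δ := by positivity
  have hexp : ‖Complex.exp z‖ ≤ Real.exp ‖z‖ := Complex.norm_exp_le_exp_norm z
  have hfm : ‖f z‖ ≤ m := by
    calc ‖f z‖ ≤ ‖Complex.exp z‖ + δ := by
          have := norm_sub_norm_le (f z) (Complex.exp z); linarith [hf z hzL]
      _ ≤ Real.exp ‖z‖ * (1 + δ) := by nlinarith [Real.one_le_exp (norm_nonneg z)]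
      _ ≤ m := by rw [show m = _ from Real.exp_add _ _]; gcongr; linarith [Real.add_one_le_exp δ]
  have hem : ‖Complex.exp z‖ ≤ m := hexp.trans (Real.exp_le_exp.2 (by linarith))
  have hpow : Complex.exp z ^ n = Complex.exp lam := by
    rw [← Complex.exp_nat_mul, mul_div_cancel₀ _ (by exact_mod_cast hn.ne')]
  have hmn : m ^ n ≤ Real.exp (L + K * L ^ (p + 1)) := by
    rw [← Real.exp_nat_mul]
    gcongr
    calc (n : ℝ) * (‖z‖ + δ) = L + K * L ^ (p + 1) / n ^ p := by
          simp only [δ, hz, div_pow]; field_simp; ring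
      _ ≤ L + K * L ^ (p + 1) := by
          gcongr; exact div_le_self (by positivity) (one_le_pow₀ (by exact_mod_cast hn))
  have hm1 : 1 ≤ m := Real.one_le_exp (by positivity)
  calc ‖f z ^ n - Complex.exp lam‖ ≤ n * m ^ (n - 1) * ‖f z - Complex.exp z‖ :=
        hpow ▸ norm_pow_sub_pow_le hfm hem n
    _ ≤ n * m ^ n * δ := by
        gcongr n * ?_ * ?_
        exacts [pow_le_pow_right₀ hm1 (Nat.sub_le n 1), hf z hzL]
    _ = K * L ^ (p + 1) * m ^ n / n ^ p := by simp only [δ, hz, div_pow]; field_simp; ring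
    _ ≤ _ := by gcongr

theorem exists_norm_eval_sub_exp_le_of_coeff_eq_inv_factorial {P : ℂ[X]} {p : ℕ}
    (hP : ∀ m ≤ p, P.coeff m = (m ! : ℂ)⁻¹) (L : ℝ) :
    ∃ K, 0 ≤ K ∧ ∀ z : ℂ, ‖z‖ ≤ L → ‖P.eval z - Complex.exp z‖ ≤ K * ‖z‖ ^ (p + 1) := by
  set T : ℂ[X] := ∑ m ∈ range (p + 1), C (m ! : ℂ)⁻¹ * X ^ m
  have hT : ∀ z, T.eval z = ∑ m ∈ range (p + 1), z ^ m / m ! := fun z => by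
    simp [T, eval_finsetSum, div_eq_inv_mul]
  obtain ⟨Q, hQ⟩ : X ^ (p + 1) ∣ P - T := by
    refine X_pow_dvd_iff.2 fun d hd => ?_
    simp [T, hP d (by omega), hd]
  obtain ⟨M, hM⟩ := (isCompact_closedBall (0 : ℂ) L).exists_bound_of_continuousOn
    Q.continuous.continuousOn
  refine ⟨max M 0 + Real.exp L, by positivity, fun z hz => ?_⟩
  have hQz : ‖Q.eval z‖ ≤ max M 0 := (hM z (by simpa using hz)).trans (le_max_left _ _)
  have hPz : P.eval z = T.eval z + z ^ (p + 1) * Q.eval z := by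
    have := congrArg (eval z) hQ
    simp only [eval_sub, eval_mul, eval_pow, eval_X] at this
    linear_combination this
  calc ‖P.eval z - Complex.exp z‖
      = ‖z ^ (p + 1) * Q.eval z - (Complex.exp z - ∑ m ∈ range (p + 1), z ^ m / m !)‖ := by
        rw [hPz, hT]; ring_nf
    _ ≤ ‖z‖ ^ (p + 1) * max M 0 + ‖z‖ ^ (p + 1) * Real.exp ‖z‖ := by
        refine (norm_sub_le _ _).trans
          (add_le_add ?_ (Complex.norm_exp_sub_sum_le_norm_mul_exp _ _))
        rw [norm_mul, norm_pow]; gcongr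
    _ ≤ (max M 0 + Real.exp L) * ‖z‖ ^ (p + 1) := by
        rw [mul_comm _ (max M 0), add_mul, mul_comm (Real.exp L)]; gcongr

noncomputable def gegenbauerCPoly (w : ℂ) : ℕ → ℂ[X]
  | 0 => 1
  | 1 => C 3 * (1 + C w * X)
  | (j + 2) =>
      C ((2 * ((j : ℂ) + 2) + 1) / ((j : ℂ) + 2)) * (1 + C w * X) * gegenbauerCPoly w (j + 1)
        - C ((((j : ℂ) + 2) + 1) / ((j : ℂ) + 2)) * gegenbauerCPoly w j

section

variable (w : ℂ)

theorem eval_gegenbauerCPoly (j : ℕ) (z : ℂ) :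
    (gegenbauerCPoly w j).eval z = gegenbauerC j (1 + w * z) := by
  induction j using Nat.twoStepInduction with
  | zero => simp [gegenbauerCPoly, gegenbauerC]
  | one => simp [gegenbauerCPoly, gegenbauerC]
  | more j ih₀ ih₁ => simp [gegenbauerCPoly, gegenbauerC, ih₀, ih₁, mul_assoc]

theorem gegenbauerCPoly_coeff_add_two_succ (j k : ℕ) : (gegenbauerCPoly w (j + 2)).coeff (k + 1) =
    (2 * ((j : ℂ) + 2) + 1) / ((j : ℂ) + 2) *
        ((gegenbauerCPoly w (j + 1)).coeff (k + 1) + w * (gegenbauerCPoly w (j + 1)).coeff k)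
      - (((j : ℂ) + 2) + 1) / ((j : ℂ) + 2) * (gegenbauerCPoly w j).coeff (k + 1) := by
  simp [gegenbauerCPoly, mul_assoc, add_mul, coeff_X_mul]

-- `w^k C_j^{(k)}(1) / k!`, the Taylor coefficients of `C_j` at `1` rescaled by `x = 1 + w z`.
theorem gegenbauerCPoly_coeff_zero (j : ℕ) :
    (gegenbauerCPoly w j).coeff 0 = ((j : ℂ) + 1) * ((j : ℂ) + 2) / 2 := by
  induction j using Nat.twoStepInduction with
  | zero => simp [gegenbauerCPoly]
  | one => norm_num [gegenbauerCPoly]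
  | more j ih₀ ih₁ =>
    have : (j : ℂ) + 2 ≠ 0 := by norm_cast
    simp only [gegenbauerCPoly, coeff_sub, mul_assoc, add_mul, one_mul, coeff_add, mul_coeff_zero,
      coeff_C_zero, coeff_X_zero, zero_mul, ih₀, ih₁]
    push_cast
    field_simp
    ring

theorem gegenbauerCPoly_coeff_one (j : ℕ) :
    (gegenbauerCPoly w j).coeff 1 =
      w * (j * ((j : ℂ) + 1) * ((j : ℂ) + 2) * ((j : ℂ) + 3)) / 8 := by
  induction j using Nat.twoStepInduction with
  | zero => simp [gegenbauerCPoly, coeff_one]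
  | one =>
    simp only [gegenbauerCPoly, coeff_C_mul, mul_add, coeff_add, coeff_one, coeff_X_one,
      one_ne_zero, if_false]
    ring
  | more j ih₀ ih₁ =>
    have : (j : ℂ) + 2 ≠ 0 := by norm_cast
    rw [gegenbauerCPoly_coeff_add_two_succ, ih₀, ih₁, gegenbauerCPoly_coeff_zero]
    push_cast
    field_simp
    ring

theorem gegenbauerCPoly_coeff_two (j : ℕ) :
    (gegenbauerCPoly w j).coeff 2 = w ^ 2 *
      (((j : ℂ) - 1) * j * ((j : ℂ) + 1) * ((j : ℂ) + 2) * ((j : ℂ) + 3) * ((j : ℂ) + 4)) / 96 := by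
  induction j using Nat.twoStepInduction with
  | zero => simp [gegenbauerCPoly, coeff_one]
  | one => simp [gegenbauerCPoly, coeff_one]
  | more j ih₀ ih₁ =>
    have : (j : ℂ) + 2 ≠ 0 := by norm_cast
    rw [gegenbauerCPoly_coeff_add_two_succ, ih₀, ih₁, gegenbauerCPoly_coeff_one]
    push_cast
    field_simp
    ring

end

noncomputable def rkg2Poly (s : ℕ) : ℂ[X] :=
  C (rkg2A s : ℂ) + C (rkg2B s : ℂ) * gegenbauerCPoly (rkg2W s) s

theorem eval_rkg2Poly (s : ℕ) (z : ℂ) : (rkg2Poly s).eval z = rkg2RC s s z := by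
  simp [rkg2Poly, rkg2RC, eval_gegenbauerCPoly]

theorem rkg2Poly_coeff_eq_inv_factorial {s : ℕ} (hs : 2 ≤ s) :
    ∀ m ≤ 2, (rkg2Poly s).coeff m = (m ! : ℂ)⁻¹ := by
  have h₀ : (s : ℂ) ≠ 0 := by norm_cast; omega
  have h₁ : (s : ℂ) - 1 ≠ 0 := sub_ne_zero.2 (by norm_cast; omega)
  have h₂ : (s : ℂ) + 2 ≠ 0 := by norm_cast
  have h₃ : (s : ℂ) + 3 ≠ 0 := by norm_cast
  have h₄ : (s : ℂ) + 4 ≠ 0 := by norm_cast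
  intro m hm
  interval_cases m <;>
    simp only [rkg2Poly, coeff_add, coeff_C_mul, coeff_C, gegenbauerCPoly_coeff_zero,
      gegenbauerCPoly_coeff_one, gegenbauerCPoly_coeff_two, rkg2A, rkg2B, rkg2W] <;>
    push_cast <;> field_simp <;> ring

/-- The RKG2 method converges with order 2 on the linear model equation: for every integer
`s ≥ 2` and every complex number `λ`, there exists a constant `C > 0` such that for every
positive integer `n`, `|R_s(λ/n)^n − exp(λ)| ≤ C/n^2`. -/
theorem rkg2_second_order_convergence (s : ℕ) (hs : 2 ≤ s) (lam : ℂ) :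
    ∃ C : ℝ, 0 < C ∧ ∀ n : ℕ, 0 < n →
      ‖(rkg2RC s s (lam / n)) ^ n - Complex.exp lam‖ ≤ C / (n : ℝ) ^ 2 := by
  obtain ⟨K, hK, hlocal⟩ :=
    exists_norm_eval_sub_exp_le_of_coeff_eq_inv_factorial (rkg2Poly_coeff_eq_inv_factorial hs) ‖lam‖
  refine ⟨K * ‖lam‖ ^ 3 * Real.exp (‖lam‖ + K * ‖lam‖ ^ 3) + 1, by positivity, fun n hn => ?_⟩
  calc ‖(rkg2RC s s (lam / n)) ^ n - Complex.exp lam‖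
      ≤ K * ‖lam‖ ^ 3 * Real.exp (‖lam‖ + K * ‖lam‖ ^ 3) / n ^ 2 := by
        simpa only [eval_rkg2Poly] using norm_pow_div_sub_exp_le hK hlocal hn
    _ ≤ _ := by gcongr; exact le_add_of_nonneg_right zero_le_one
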